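/- arXiv:2011.06636 — 2 statements merged into one kernel-verified Lean document; each statement's English description precedes it below -/
import Mathlib

section
/- Let M ≥ 1 be an integer and let λ* > 1 satisfy T_M(λ*) = 3. Define f(λ) = ((λ*+1)λ + (λ*-1))/2 and G_M(λ) = T_M(f(λ))/3. Then G_M(1) = 1, and for every λ ∈ [-1, 1) one has |G_M(λ)| < 1. In particular, the amplification polynomial is a strict contraction of every value strictly inside the interval where Jacobi iteration converges. -/
private lemma T_real_cosh (n : ℤ) (t : ℝ) :
    (Polynomial.Chebyshev.T ℝ n).eval (Real.cosh t) = Real.cosh (n * t) := by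
  have h := Polynomial.Chebyshev.T_complex_cos ((t : ℂ) * Complex.I) n
  rw [Complex.cos_mul_I] at h
  have h2 : (n : ℂ) * ((t : ℂ) * Complex.I) = ((n * t : ℝ) : ℂ) * Complex.I := by
    push_cast; ring
  rw [h2, Complex.cos_mul_I] at h
  have := Polynomial.Chebyshev.complex_ofReal_eval_T (Real.cosh t) n
  rw [Complex.ofReal_cosh] at this
  have := this.trans h
  exact_mod_cast this

private lemma cosh_surj (x : ℝ) (hx : 1 ≤ x) : ∃ t, 0 ≤ t ∧ Real.cosh t = x := by
  have hmem : x ∈ Set.Icc (Real.cosh 0) (Real.cosh (2 * x)) := by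
    constructor
    · simpa using hx
    · have h2 : Real.cosh (2 * x) = (Real.exp (2 * x) + Real.exp (-(2 * x))) / 2 :=
        Real.cosh_eq (2 * x)
      have h3 : 0 < Real.exp (-(2 * x)) := Real.exp_pos _
      nlinarith [Real.add_one_le_exp (2 * x)]
  have h0 : (0 : ℝ) ≤ 2 * x := by linarith
  obtain ⟨t, ht, hct⟩ := intermediate_value_Icc h0 Real.continuous_cosh.continuousOn hmem
  exact ⟨t, ht.1, hct⟩

private lemma one_le_T (n : ℤ) (x : ℝ) (hx : 1 ≤ x) :
    1 ≤ (Polynomial.Chebyshev.T ℝ n).eval x := by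
  obtain ⟨t, _, ht⟩ := cosh_surj x hx
  rw [← ht, T_real_cosh]
  exact Real.one_le_cosh _

private lemma T_strictMono (M : ℕ) (hM : 1 ≤ M) {x y : ℝ} (hx : 1 ≤ x) (hxy : x < y) :
    (Polynomial.Chebyshev.T ℝ (M : ℤ)).eval x < (Polynomial.Chebyshev.T ℝ (M : ℤ)).eval y := by
  obtain ⟨t, ht0, ht⟩ := cosh_surj x hx
  obtain ⟨s, hs0, hs⟩ := cosh_surj y (hx.trans hxy.le)
  rw [← ht, ← hs, T_real_cosh, T_real_cosh]
  have hts : t < s := by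
    by_contra h
    push_neg at h
    exact absurd (ht ▸ hs ▸ Real.cosh_le_cosh.2 (by rwa [abs_of_nonneg hs0, abs_of_nonneg ht0]))
      (not_le.2 hxy)
  have hMpos : (0 : ℝ) < (M : ℝ) := by exact_mod_cast hM
  rw [Real.cosh_lt_cosh]
  push_cast
  rw [abs_of_nonneg (by positivity), abs_of_nonneg (by positivity)]
  exact by nlinarith

private lemma abs_T_le_one (n : ℤ) (x : ℝ) (hx : x ∈ Set.Icc (-1 : ℝ) 1) :
    |(Polynomial.Chebyshev.T ℝ n).eval x| ≤ 1 := by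
  have : x = Real.cos (Real.arccos x) := (Real.cos_arccos hx.1 hx.2).symm
  rw [this, Polynomial.Chebyshev.T_real_cos]
  exact Real.abs_cos_le_one _

/-- The amplification polynomial `G_M(λ) = T_M(f(λ))/3` satisfies `G_M(1) = 1` and is a
strict contraction on `[-1, 1)`: `|G_M(λ)| < 1` there. -/
theorem stmt11 (M : ℕ) (hM : 1 ≤ M) (lamstar : ℝ) (hlam : 1 < lamstar)
    (hT : (Polynomial.Chebyshev.T ℝ (M : ℤ)).eval lamstar = 3)
    (f G : ℝ → ℝ)
    (hf : ∀ lam, f lam = ((lamstar + 1) * lam + (lamstar - 1)) / 2)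
    (hG : ∀ lam, G lam = (Polynomial.Chebyshev.T ℝ (M : ℤ)).eval (f lam) / 3) :
    G 1 = 1 ∧ ∀ lam ∈ Set.Ico (-1 : ℝ) 1, |G lam| < 1 := by
  have hf1 : f 1 = lamstar := by rw [hf]; ring
  constructor
  · rw [hG, hf1, hT]; norm_num
  · intro lam hlam'
    obtain ⟨h1, h2⟩ := hlam'
    have hge : (-1 : ℝ) ≤ f lam := by rw [hf]; nlinarith
    have hlt : f lam < lamstar := by rw [hf]; nlinarith
    rw [hG, abs_div]
    rw [show |(3:ℝ)| = 3 by norm_num]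
    rw [div_lt_one (by norm_num)]
    rcases le_or_gt (f lam) 1 with hc | hc
    · have := abs_T_le_one (M : ℤ) (f lam) ⟨hge, hc⟩
      linarith
    · have hlt3 : (Polynomial.Chebyshev.T ℝ (M : ℤ)).eval (f lam) < 3 := by
        rw [← hT]; exact T_strictMono M hM hc.le hlt
      have hge1 : 1 ≤ (Polynomial.Chebyshev.T ℝ (M : ℤ)).eval (f lam) := one_le_T _ _ hc.le
      rw [abs_of_nonneg (by linarith)]
      exact hlt3
end

section
/- Let M ≥ 1 be an integer, let λ* > 1 satisfy T_M(λ*) = 3, let x_j = cos((2j+1)π/(2M)) for j = 0, …, M-1 be the roots of T_M, and define the SRJ relaxation factors ω_j = (λ*+1)/(2(λ*-x_j)). Then for every λ ∈ ℝ, ∏_{j=0}^{M-1} [(1-ω_j) + ω_j λ] = T_M(f(λ))/3, where f(λ) = ((λ*+1)λ + (λ*-1))/2. That is, the amplification polynomial of the SRJ scheme with relaxation factors ω_0, …, ω_{M-1} is exactly the scaled, affinely transformed Chebyshev polynomial T_M(f(λ))/3. -/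
/-!
The roots of `T_M` are exactly the `x_j`, so `T_M = 2^(M-1) ∏ (X - x_j)`. Each SRJ factor is
`(1 - ω_j) + ω_j λ = (f(λ) - x_j) / (λ* - x_j)`, hence the product is `T_M(f(λ)) / T_M(λ*)`.
The denominators `λ* - x_j` do not vanish because `T_M(λ*) = 3 ≠ 0`.
-/

open Polynomial Real

namespace Polynomial.Chebyshev

theorem T_real_eq_C_mul_prod (n : ℕ) :
    T ℝ n = Polynomial.C (2 ^ (n - 1)) *
      ∏ k ∈ Finset.range n, (X - Polynomial.C (cos ((2 * k + 1) * π / (2 * n)))) := by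
  have hinj : Set.InjOn (fun k : ℕ ↦ cos ((2 * k + 1) * π / (2 * n))) (Finset.range n) :=
    (Finset.range n).nodup_map_iff_injOn.mp (roots_T_real_nodup n)
  have hcard : (T ℝ n).roots.card = (T ℝ n).natDegree := by
    rw [roots_T_real, natDegree_T, Int.natAbs_natCast, Finset.card_val,
      Finset.card_image_of_injOn hinj, Finset.card_range]
  rw [← C_leadingCoeff_mul_prod_multiset_X_sub_C hcard, leadingCoeff_T, Int.natAbs_natCast,
    roots_T_real, ← Finset.prod_eq_multiset_prod, Finset.prod_image hinj]

theorem eval_T_real_eq_prod (n : ℕ) (y : ℝ) :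
    (T ℝ n).eval y =
      2 ^ (n - 1) * ∏ j : Fin n, (y - cos ((2 * (j : ℕ) + 1) * π / (2 * n))) := by
  rw [T_real_eq_C_mul_prod, eval_mul, eval_C, eval_prod, ← Fin.prod_univ_eq_prod_range]
  simp only [eval_sub, eval_X, eval_C]

end Polynomial.Chebyshev

open Polynomial.Chebyshev

theorem srj_factor_eq_div {K : Type*} [Field K] [NeZero (2 : K)] {a x : K} (h : a - x ≠ 0)
    (lam : K) :
    (1 - (a + 1) / (2 * (a - x))) + (a + 1) / (2 * (a - x)) * lam
      = (((a + 1) * lam + (a - 1)) / 2 - x) / (a - x) := by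
  field_simp
  ring

theorem stmt15_general (M : ℕ) (lamstar : ℝ)
    (hT : (Polynomial.Chebyshev.T ℝ (M : ℤ)).eval lamstar = 3)
    (x ω : Fin M → ℝ)
    (hx : ∀ j : Fin M, x j = Real.cos ((2 * (j : ℕ) + 1) * Real.pi / (2 * M)))
    (hω : ∀ j, ω j = (lamstar + 1) / (2 * (lamstar - x j)))
    (f : ℝ → ℝ)
    (hf : ∀ lam, f lam = ((lamstar + 1) * lam + (lamstar - 1)) / 2) :
    ∀ lam : ℝ, ∏ j : Fin M, ((1 - ω j) + ω j * lam)
      = (Polynomial.Chebyshev.T ℝ (M : ℤ)).eval (f lam) / 3 := by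
  intro lam
  have hT_eval (y : ℝ) : (T ℝ M).eval y = 2 ^ (M - 1) * ∏ j, (y - x j) := by
    simp only [eval_T_real_eq_prod, hx]
  have hne : ∀ j, lamstar - x j ≠ 0 := by
    have : ∏ j, (lamstar - x j) ≠ 0 := by
      rw [hT_eval] at hT
      exact right_ne_zero_of_mul (hT.trans_ne three_ne_zero)
    exact fun j ↦ Finset.prod_ne_zero_iff.mp this j (Finset.mem_univ j)
  calc ∏ j, ((1 - ω j) + ω j * lam) = ∏ j, (f lam - x j) / (lamstar - x j) :=
        Finset.prod_congr rfl fun j _ ↦ by rw [hω, hf, srj_factor_eq_div (hne j)]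
    _ = (T ℝ M).eval (f lam) / (T ℝ M).eval lamstar := by
        rw [hT_eval, hT_eval, Finset.prod_div_distrib, mul_div_mul_left _ _ (by positivity)]
    _ = (T ℝ M).eval (f lam) / 3 := by rw [hT]

/-- With the SRJ relaxation factors `ω_j = (λ*+1)/(2(λ*-x_j))` built from the Chebyshev
roots `x_j`, the amplification polynomial `∏ j [(1-ω_j) + ω_j λ]` equals `T_M(f(λ))/3`. -/
theorem stmt15 (M : ℕ) (hM : 1 ≤ M) (lamstar : ℝ) (hlam : 1 < lamstar)
    (hT : (Polynomial.Chebyshev.T ℝ (M : ℤ)).eval lamstar = 3)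
    (x ω : Fin M → ℝ)
    (hx : ∀ j : Fin M, x j = Real.cos ((2 * (j : ℕ) + 1) * Real.pi / (2 * M)))
    (hω : ∀ j, ω j = (lamstar + 1) / (2 * (lamstar - x j)))
    (f : ℝ → ℝ)
    (hf : ∀ lam, f lam = ((lamstar + 1) * lam + (lamstar - 1)) / 2) :
    ∀ lam : ℝ, ∏ j : Fin M, ((1 - ω j) + ω j * lam)
      = (Polynomial.Chebyshev.T ℝ (M : ℤ)).eval (f lam) / 3 :=
  stmt15_general M lamstar hT x ω hx hω f hf
end
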